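/- Suppose f is continuous on S, f attains a global minimum at some point x* lying in the support of ρ_in, and the initial positions x_0^1, …, x_0^N are i.i.d. with law ρ_in. Let f_∞ := lim_{n→∞} f(p_n) (which exists since f(p_n) is monotone decreasing and bounded below by min f). Then the essential infimum over the sample space of f_∞ equals the global minimum: ess inf_{ω ∈ Ω} f_∞(ω) = min_{x ∈ S} f(x). Equivalently, f_∞ ≥ min f almost surely, and for every ε > 0 the event {f_∞ < min f + ε} has positive probability. -/

import Mathlib

open MeasureTheory ProbabilityTheory Filter Topology

noncomputable section

/-- `Euc d` is the `d`-dimensional Euclidean space `ℝ^d`. -/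
abbrev Euc (d : ℕ) := EuclideanSpace ℝ (Fin d)

/-- Entrywise (Hadamard) product on `ℝ^d`. -/
def hadamard {d : ℕ} (u v : Euc d) : Euc d := WithLp.toLp 2 (fun k => u k * v k)

/-- The anisotropic DCBO update map `F₁(x,y,η) = x + γ¹(y−x) + γ²(y−x)⊙η`. -/
def F1 {d : ℕ} (γ1 γ2 : ℝ) (x y η : Euc d) : Euc d :=
  x + γ1 • (y - x) + γ2 • hadamard (y - x) η

/-- The isotropic DCBO update map `F₂(x,y,η) = x + γ̄¹(y−x) + γ̄²‖y−x‖η/√d`. -/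
def F2 {d : ℕ} (γ1 γ2 : ℝ) (x y η : Euc d) : Euc d :=
  x + γ1 • (y - x) + ((γ2 * ‖y - x‖) / Real.sqrt d) • η

/-- The standard Gaussian measure `N_d(0, I_d)` on `ℝ^d`. -/
def stdGaussian (d : ℕ) : Measure (Euc d) :=
  (Measure.pi fun _ : Fin d => gaussianReal 0 1).map (EuclideanSpace.equiv (Fin d) ℝ).symm

/-!
The leader never moves (both update maps satisfy `F(x, x, η) = x`), so `f(p_n)` is nonincreasing and
`f_∞ ≤ f(x_0^i)` for every agent `i`, while `f_∞ ≥ min f` trivially. Since `x*` lies in the support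
of `ρ_in` and `f` is continuous on `S` at `x*`, the event `{f(x_0^1) < min f + ε}` has positive
probability, and on it `f_∞ < min f + ε`.
-/

theorem hadamard_zero_left {d : ℕ} (v : Euc d) : hadamard 0 v = 0 := by
  ext k
  simp [hadamard]

theorem F1_self {d : ℕ} (γ1 γ2 : ℝ) (a e : Euc d) : F1 γ1 γ2 a a e = a := by
  simp [F1, hadamard_zero_left]

theorem F2_self {d : ℕ} (γ1 γ2 : ℝ) (a e : Euc d) : F2 γ1 γ2 a a e = a := by
  simp [F2]

theorem antitone_apply_leader {α ι β : Type*} [Preorder β] (f : α → β) {x : ℕ → ι → α}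
    {lead : ℕ → ι} (hmin : ∀ n j, f (x n (lead n)) ≤ f (x n j))
    (hstay : ∀ n, x (n + 1) (lead n) = x n (lead n)) :
    Antitone fun n => f (x n (lead n)) :=
  antitone_nat_of_succ_le fun n => hstay n ▸ hmin (n + 1) (lead n)

theorem essInf_eq_of_ae_le_of_measure_lt_ne_zero {Ω β : Type*} [MeasurableSpace Ω]
    [CompleteLinearOrder β] [DenselyOrdered β] {μ : Measure Ω} {g : Ω → β} {m : β}
    (hle : ∀ᵐ ω ∂μ, m ≤ g ω) (hpos : ∀ c, m < c → μ {ω | g ω < c} ≠ 0) :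
    essInf g μ = m := by
  refine le_antisymm ?_ (le_essInf_of_ae_le m hle)
  by_contra! hlt
  obtain ⟨c, hmc, hc⟩ := exists_between hlt
  exact hpos c hmc <| measure_mono_null (fun ω hω => not_lt_of_gt hω)
    (ae_iff.mp (ae_lt_of_lt_essInf hc))

section Support

variable {α : Type*} [TopologicalSpace α] [MeasurableSpace α] {ν : Measure α} {S U : Set α} {a : α}

theorem measure_inter_pos_of_forall_isOpen (ha : ∀ U, IsOpen U → a ∈ U → 0 < ν U)
    (hS : ν Sᶜ = 0) (hU : IsOpen U) (haU : a ∈ U) : 0 < ν (U ∩ S) :=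
  calc 0 < ν U := ha U hU haU
    _ ≤ ν (U ∩ S ∪ Sᶜ) := measure_mono fun y hy => (em (y ∈ S)).imp (⟨hy, ·⟩) id
    _ ≤ ν (U ∩ S) + ν Sᶜ := measure_union_le _ _
    _ = ν (U ∩ S) := by rw [hS, add_zero]

theorem mem_closure_of_forall_isOpen_measure_pos (ha : ∀ U, IsOpen U → a ∈ U → 0 < ν U)
    (hS : ν Sᶜ = 0) : a ∈ closure S :=
  mem_closure_iff.mpr fun _ hU haU =>
    nonempty_of_measure_ne_zero (measure_inter_pos_of_forall_isOpen ha hS hU haU).ne'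

end Support

theorem dcbo_essinf_limit_eq_min_general
    {Ω : Type*} [MeasurableSpace Ω] (P : Measure Ω)
    {d N : ℕ} (hN : 1 ≤ N)
    (f : Euc d → EReal)
    (S : Set (Euc d)) (hScl : IsClosed S)
    (hfc : ContinuousOn f S)
    (γ1 γ2 γb1 γb2 : ℝ)
    (choice : Fin N → Bool)
    (η : ℕ → Fin N → Ω → Euc d)
    -- the initial positions are i.i.d. with law `ρ_in`, whose support lies in `S`
    (ρin : Measure (Euc d)) (hρS : ρin Sᶜ = 0)
    (x : ℕ → Fin N → Ω → Euc d)
    (hx0meas : ∀ i, Measurable (x 0 i))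
    (hx0dist : ∀ i, Measure.map (x 0 i) P = ρin)
    (p : ℕ → Ω → Euc d) (ι : ℕ → Ω → Fin N)
    (hp : ∀ n ω, p n ω = x n (ι n ω) ω)
    (hmin : ∀ n ω j, f (x n (ι n ω) ω) ≤ f (x n j ω))
    (hrec : ∀ n i ω, x (n + 1) i ω =
      if choice i then F1 γ1 γ2 (x n i ω) (p n ω) (η n i ω)
      else F2 γb1 γb2 (x n i ω) (p n ω) (η n i ω))
    -- `x*` is a global minimizer of `f` lying in the support of `ρ_in`
    (xstar : Euc d) (hxstarmin : ∀ y, f xstar ≤ f y)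
    (hxstarsupp : ∀ U : Set (Euc d), IsOpen U → xstar ∈ U → 0 < ρin U)
    -- `f_∞ := lim_n f(p_n)`
    (fLim : Ω → EReal)
    (hfLim : ∀ ω, Tendsto (fun n => f (p n ω)) atTop (nhds (fLim ω))) :
    essInf fLim P = f xstar := by
  have hstay : ∀ n ω, x (n + 1) (ι n ω) ω = x n (ι n ω) ω := fun n ω => by
    rw [hrec, ← hp]
    cases choice (ι n ω) <;> simp [F1_self, F2_self]
  have hlim_le : ∀ ω j, fLim ω ≤ f (x 0 j ω) := fun ω j => by
    have hanti := antitone_apply_leader f (x := fun n i => x n i ω) (hmin · ω) (hstay · ω)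
    simp only [← hp] at hanti
    exact (hanti.le_of_tendsto (hfLim ω) 0).trans (hp 0 ω ▸ hmin 0 ω j)
  refine essInf_eq_of_ae_le_of_measure_lt_ne_zero
    (ae_of_all _ fun ω => ge_of_tendsto' (hfLim ω) fun n => hxstarmin _) fun c hc => ?_
  have hxstarS : xstar ∈ S := hScl.closure_subset
    (mem_closure_of_forall_isOpen_measure_pos hxstarsupp hρS)
  obtain ⟨V, hVopen, hxV, hVS⟩ :=
    mem_nhdsWithin.mp (hfc xstar hxstarS (Iio_mem_nhds hc))
  let i0 : Fin N := ⟨0, hN⟩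
  have hevent : x 0 i0 ⁻¹' (V ∩ S) ⊆ {ω | fLim ω < c} := fun ω hω =>
    (hlim_le ω i0).trans_lt (hVS hω)
  have hprob : P (x 0 i0 ⁻¹' (V ∩ S)) = ρin (V ∩ S) := by
    rw [← Measure.map_apply (hx0meas i0) (hVopen.measurableSet.inter hScl.measurableSet),
      hx0dist]
  exact (measure_mono hevent).trans_lt' (hprob ▸ measure_inter_pos_of_forall_isOpen
    hxstarsupp hρS hVopen hxV) |>.ne'

/-- Suppose `f` is continuous on `S` and attains its global minimum at a
point `x*` in the support of `ρ_in`, and the initial positions are i.i.d. with law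
`ρ_in`.  Then, for `f_∞ := lim_n f(p_n)`, the essential infimum of `f_∞` over the sample
space equals the global minimum: `ess inf_ω f_∞(ω) = min f = f(x*)`. -/
theorem dcbo_essinf_limit_eq_min
    {Ω : Type*} [MeasurableSpace Ω] (P : Measure Ω) [IsProbabilityMeasure P]
    {d N : ℕ} (hd : 1 ≤ d) (hN : 1 ≤ N)
    (f : Euc d → EReal) (hf : Measurable f)
    (S : Set (Euc d)) (hS : S = {y | f y < ⊤}) (hSne : S.Nonempty) (hScl : IsClosed S)
    (hfc : ContinuousOn f S)
    (γ1 γ2 γb1 γb2 : ℝ)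
    (hγ1 : γ1 ∈ Set.Ioo (0:ℝ) 1) (hγ2 : 0 ≤ γ2)
    (hγb1 : γb1 ∈ Set.Ioo (0:ℝ) 1) (hγb2 : 0 ≤ γb2)
    (choice : Fin N → Bool)
    (η : ℕ → Fin N → Ω → Euc d)
    (hηmeas : ∀ n i, Measurable (η n i))
    (hηdist : ∀ n i, Measure.map (η n i) P = stdGaussian d)
    (hηindep : iIndepFun (fun (q : ℕ × Fin N) ω => η q.1 q.2 ω) P)
    -- the initial positions are i.i.d. with law `ρ_in`, whose support lies in `S`
    (ρin : Measure (Euc d)) [IsProbabilityMeasure ρin] (hρS : ρin Sᶜ = 0)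
    (x : ℕ → Fin N → Ω → Euc d)
    (hx0meas : ∀ i, Measurable (x 0 i))
    (hx0dist : ∀ i, Measure.map (x 0 i) P = ρin)
    (hx0indep : iIndepFun (fun (i : Fin N) ω => x 0 i ω) P)
    (hindep0 : Indep (⨆ i : Fin N, MeasurableSpace.comap (x 0 i) inferInstance)
        (⨆ (n : ℕ) (i : Fin N), MeasurableSpace.comap (η n i) inferInstance) P)
    (p : ℕ → Ω → Euc d) (ι : ℕ → Ω → Fin N)
    (hp : ∀ n ω, p n ω = x n (ι n ω) ω)
    (hmin : ∀ n ω j, f (x n (ι n ω) ω) ≤ f (x n j ω))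
    (htie : ∀ n ω j, f (x n j ω) = f (x n (ι n ω) ω) → ι n ω ≤ j)
    (hrec : ∀ n i ω, x (n + 1) i ω =
      if choice i then F1 γ1 γ2 (x n i ω) (p n ω) (η n i ω)
      else F2 γb1 γb2 (x n i ω) (p n ω) (η n i ω))
    -- `x*` is a global minimizer of `f` lying in the support of `ρ_in`
    (xstar : Euc d) (hxstarmin : ∀ y, f xstar ≤ f y)
    (hxstarsupp : ∀ U : Set (Euc d), IsOpen U → xstar ∈ U → 0 < ρin U)
    -- `f_∞ := lim_n f(p_n)`
    (fLim : Ω → EReal)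
    (hfLim : ∀ ω, Tendsto (fun n => f (p n ω)) atTop (nhds (fLim ω))) :
    essInf fLim P = f xstar :=
  dcbo_essinf_limit_eq_min_general P hN f S hScl hfc γ1 γ2 γb1 γb2 choice η ρin hρS x hx0meas
    hx0dist p ι hp hmin hrec xstar hxstarmin hxstarsupp fLim hfLim
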